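/- arXiv:2408.13941 — 2 statements merged into one kernel-verified Lean document; each statement's English description precedes it below -/
import Mathlib

section
/- Let r and n be positive integers, let O be any positive-dominant total order on C(r,n), and let η ∈ G(r,n). Then, as an identity of formal power series in two variables t and q with integer coefficients, (Σ_{f ∈ N_0^{r,n} : γ_O(f) = η} t^{max(f)} q^{n·max(f) − |f|}) · ∏_{i=0}^{n−1} (1 − t q^i) = t^{des_O(η)} q^{maj_O(η)}. (The left-hand sum is a well-defined formal power series: for each pair (M,s) there are only finitely many f with γ_O(f) = η, max(f) = M and n·M − |f| = s.) -/
open scoped Classical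

abbrev CI : Type := ℕ × ℕ

/-- Membership in the set `C(r,n)` of colored integers. -/
def memC (r n : ℕ) (x : CI) : Prop :=
  x.1 ≤ n ∧ x.2 < r ∧ (x.1 = 0 → x.2 = 0)

/-- A positive-dominant (strict) total order on the colored integers `C(r,n)`. -/
structure PDOrder (r n : ℕ) where
  lt : CI → CI → Prop
  irrefl : ∀ x, memC r n x → ¬lt x x
  trans : ∀ x y z, memC r n x → memC r n y → memC r n z → lt x y → lt y z → lt x z
  trichotomy : ∀ x y, memC r n x → memC r n y → x = y ∨ lt x y ∨ lt y x
  nat_mono : ∀ i j : ℕ, i ≤ n → j ≤ n → i < j → lt (i, 0) (j, 0)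
  pos_dom : ∀ i j c : ℕ, i ≤ n → 1 ≤ j → j ≤ n → 1 ≤ c → c < r → lt (j, c) (i, 0)

/-- A colored permutation in `G(r,n) = Z_r ≀ S_n`. -/
structure ColoredPerm (r n : ℕ) where
  perm : Equiv.Perm (Fin n)
  color : Fin n → Fin r

/-- The colored entry `π(i)^{c_i}` (values are taken in `[1,n]`). -/
def cval {r n : ℕ} (γ : ColoredPerm r n) (i : Fin n) : CI :=
  ((γ.perm i : ℕ) + 1, (γ.color i : ℕ))

/-- Entry `γ(j)` for `j ∈ {0,…,n}`, with the convention `γ(0) = 0`. -/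
def centry {r n : ℕ} (γ : ColoredPerm r n) (j : ℕ) : CI :=
  if h : 1 ≤ j ∧ j ≤ n then cval γ ⟨j - 1, by omega⟩ else (0, 0)

/-- Descent set `Des(γ) ⊆ {0,…,n-1}` with respect to the relation `lt`. -/
noncomputable def DesSet {r n : ℕ} (lt : CI → CI → Prop) (γ : ColoredPerm r n) : Finset ℕ :=
  (Finset.range n).filter fun j => lt (centry γ (j + 1)) (centry γ j)

noncomputable def desStat {r n : ℕ} (lt : CI → CI → Prop) (γ : ColoredPerm r n) : ℕ :=
  (DesSet lt γ).card

noncomputable def majStat {r n : ℕ} (lt : CI → CI → Prop) (γ : ColoredPerm r n) : ℕ :=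
  ∑ j ∈ DesSet lt γ, j

noncomputable def invStat {r n : ℕ} (lt : CI → CI → Prop) (γ : ColoredPerm r n) : ℕ :=
  ((Finset.univ : Finset (Fin n × Fin n)).filter fun p =>
    p.1 < p.2 ∧ lt (cval γ p.2) (cval γ p.1)).card

noncomputable def lenStat {r n : ℕ} (lt : CI → CI → Prop) (γ : ColoredPerm r n) : ℕ :=
  invStat lt γ +
    ∑ i ∈ Finset.univ.filter (fun i => 0 < (γ.color i : ℕ)),
      ((γ.perm i : ℕ) + 1 + (γ.color i : ℕ) - 1)

def colStat {r n : ℕ} (γ : ColoredPerm r n) : ℕ := ∑ i, (γ.color i : ℕ)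

/-- The inverse colored permutation `γ⁻¹`. -/
def cinv {r n : ℕ} (γ : ColoredPerm r n) : ColoredPerm r n :=
  ⟨γ.perm⁻¹, fun i => γ.color (γ.perm⁻¹ i)⟩

/-- An element of `N_0^{r,n}`: a sequence of colored nonnegative integers. -/
structure ColoredSeq (r n : ℕ) where
  val : Fin n → ℕ
  col : Fin n → ℕ
  col_lt : ∀ i, col i < r
  zero_col : ∀ i, val i = 0 → col i = 0

/-- `γ` is the colored permutation `γ_O(f)` obtained by sorting the colored positions
`i^{cf_i}` by increasing value `f_i`, ties broken by increasing `lt`-order. -/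
def isSorted {r n : ℕ} (lt : CI → CI → Prop) (f : ColoredSeq r n) (γ : ColoredPerm r n) : Prop :=
  (∀ i, (γ.color i : ℕ) = f.col (γ.perm i)) ∧
    ∀ i j : Fin n, i < j →
      f.val (γ.perm i) < f.val (γ.perm j) ∨
        (f.val (γ.perm i) = f.val (γ.perm j) ∧ lt (cval γ i) (cval γ j))

def maxf {r n : ℕ} (f : ColoredSeq r n) : ℕ := Finset.univ.sup f.val
def sumf {r n : ℕ} (f : ColoredSeq r n) : ℕ := ∑ i, f.val i
def colf {r n : ℕ} (f : ColoredSeq r n) : ℕ := ∑ i, f.col i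

-- Statement 2
noncomputable def lhs2 (r n : ℕ) (O : PDOrder r n) (η : ColoredPerm r n) :
    MvPowerSeries (Fin 2) ℤ :=
  fun d => (Nat.card {f : ColoredSeq r n // isSorted O.lt f η ∧
    maxf f = d 0 ∧ n * maxf f - sumf f = d 1} : ℤ)

/-!
Read the values of `f` along `η`, with the value `0` prepended at position `0`:
`0 = a₀ ≤ a₁ ≤ ⋯ ≤ aₙ = max f`. Since `O` is a linear order on `C(r,n)`, `γ_O(f) = η` says exactly
that the keys `(aⱼ, η(j))` increase lexicographically, and by transitivity it suffices to compare
consecutive keys: `aⱼ ≤ aⱼ₊₁`, strictly when `j` is a descent of `η`. At `j = 0` this is where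
positive dominance enters: `f` vanishes only at uncolored positions. Writing
`aⱼ₊₁ - aⱼ = dⱼ + [j ∈ Des η]` gives a bijection with `d ∈ ℕⁿ`, under which `max f = ∑ dⱼ + des η`
and `n·max f - |f| = ∑ j dⱼ + maj η`. Hence the series is `t^des q^maj ∏_{j<n} (1 - t q^j)⁻¹`,
and the denominators are cleared one at a time by splitting on whether `dⱼ = 0`.
-/

open Finset MvPowerSeries

section CountingSeries

variable {σ ι : Type*} (ν : σ →₀ ℕ) (w : ι → σ →₀ ℕ)

def countSet (s : Finset ι) (μ : σ →₀ ℕ) : Set (ι → ℕ) :=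
  {d | (∀ i ∉ s, d i = 0) ∧ ν + ∑ i ∈ s, d i • w i = μ}

noncomputable def countSeries (s : Finset ι) : MvPowerSeries σ ℤ :=
  fun μ => (countSet ν w s μ).ncard

variable {ν w}

lemma coeff_countSeries (s : Finset ι) (μ : σ →₀ ℕ) :
    coeff μ (countSeries ν w s) = (countSet ν w s μ).ncard := rfl

lemma countSet_finite {s : Finset ι} (hw : ∀ i ∈ s, w i ≠ 0) (μ : σ →₀ ℕ) :
    (countSet ν w s μ).Finite := by
  have hbound : ∀ d ∈ countSet ν w s μ, ∀ i ∈ s, d i ≤ μ.degree := by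
    rintro d ⟨-, hd⟩ i hi
    obtain ⟨a, ha⟩ := Finsupp.ne_iff.mp (hw i hi)
    have hle : d i • w i ≤ μ := hd ▸
      (single_le_sum (f := fun j => d j • w j) (fun _ _ => zero_le) hi).trans le_add_self
    calc d i ≤ d i * w i a := Nat.le_mul_of_pos_right _ (Nat.pos_of_ne_zero ha)
      _ ≤ μ a := hle a
      _ ≤ μ.degree := Finsupp.le_degree a μ
  refine Set.Finite.of_finite_image (f := fun d (i : s) => d i) ?_ ?_
  · refine (Set.Finite.pi fun _ => Set.finite_Iic μ.degree).subset ?_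
    rintro _ ⟨d, hd, rfl⟩ i -
    exact hbound d hd i i.2
  · intro d hd d' hd' h
    funext i
    by_cases hi : i ∈ s
    · exact congrFun h ⟨i, hi⟩
    · rw [hd.1 i hi, hd'.1 i hi]

lemma countSeries_empty : countSeries ν w (∅ : Finset ι) = monomial ν 1 := by
  ext μ
  have hset : countSet ν w ∅ μ = if μ = ν then {0} else ∅ := by
    ext d
    simp only [countSet, notMem_empty, not_false_eq_true, forall_const, sum_empty, add_zero,
      Set.mem_ofPred_eq]
    split_ifs with h
    · simp [funext_iff, h]
    · simp [Ne.symm h]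
  rw [coeff_countSeries, coeff_monomial, hset]
  split_ifs <;> simp

lemma countSeries_add (e : σ →₀ ℕ) (s : Finset ι) :
    countSeries (ν + e) w s = monomial e 1 * countSeries ν w s := by
  ext μ
  rw [coeff_monomial_mul, coeff_countSeries, coeff_countSeries, one_mul]
  split_ifs with he
  · congr 2
    ext d
    simp only [countSet, Set.mem_ofPred_eq, eq_tsub_iff_add_eq_of_le he, add_right_comm]
  · rw [Nat.cast_eq_zero, ← Set.ncard_empty (ι → ℕ)]
    congr 1
    ext d
    simp only [countSet, Set.mem_ofPred_eq, Set.mem_empty_iff_false, iff_false, not_and]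
    intro _ hd
    exact he (hd ▸ le_add_right le_add_self)

lemma countSet_insert_inter_eq {i : ι} {s : Finset ι} (hi : i ∉ s) (μ : σ →₀ ℕ) :
    countSet ν w (insert i s) μ ∩ {d | d i = 0} = countSet ν w s μ := by
  ext d
  simp only [countSet, Set.mem_inter_iff, Set.mem_ofPred_eq, sum_insert hi, mem_insert, not_or]
  constructor
  · rintro ⟨⟨hsupp, hsum⟩, hdi⟩
    refine ⟨fun j hj => ?_, by simpa [hdi] using hsum⟩
    by_cases hji : j = i
    · exact hji ▸ hdi
    · exact hsupp j ⟨hji, hj⟩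
  · rintro ⟨hsupp, hsum⟩
    have hdi := hsupp i hi
    exact ⟨⟨fun j hj => hsupp j hj.2, by simpa [hdi] using hsum⟩, hdi⟩

lemma sum_add_single_smul {i : ι} {t : Finset ι} (hi : i ∈ t) (d : ι → ℕ) :
    ∑ j ∈ t, (d + Pi.single i 1 : ι → ℕ) j • w j = ∑ j ∈ t, d j • w j + w i := by
  simp [add_smul, sum_add_distrib, Pi.single_apply, hi]

lemma countSet_diff_eq_image {i : ι} {t : Finset ι} (hi : i ∈ t) (μ : σ →₀ ℕ) :
    countSet ν w t μ \ {d | d i = 0} = (· + Pi.single i 1) '' countSet (ν + w i) w t μ := by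
  ext d
  simp only [countSet, Set.mem_sdiff, Set.mem_ofPred_eq, Set.mem_image]
  constructor
  · rintro ⟨⟨hsupp, hsum⟩, hdi⟩
    have hd : d - Pi.single i 1 + Pi.single i 1 = d := by
      funext j
      rcases eq_or_ne j i with rfl | hj
      · simp only [Pi.add_apply, Pi.sub_apply, Pi.single_eq_same]
        omega
      · simp [hj]
    refine ⟨d - Pi.single i 1, ⟨fun j hj => by simp [hsupp j hj], ?_⟩, hd⟩
    rwa [← hd, sum_add_single_smul hi, ← add_assoc, add_right_comm] at hsum
  · rintro ⟨d, ⟨hsupp, hsum⟩, rfl⟩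
    refine ⟨⟨fun j hj => ?_, ?_⟩, by simp⟩
    · simp [hsupp j hj, show j ≠ i from fun h => hj (h ▸ hi)]
    · rwa [sum_add_single_smul hi, ← add_assoc, add_right_comm]

lemma countSeries_insert {i : ι} {s : Finset ι} (hi : i ∉ s) (hw : ∀ j ∈ insert i s, w j ≠ 0) :
    countSeries ν w (insert i s) =
      countSeries ν w s + monomial (w i) 1 * countSeries ν w (insert i s) := by
  ext μ
  rw [map_add, ← countSeries_add, coeff_countSeries, coeff_countSeries, coeff_countSeries,
    ← Set.ncard_inter_add_ncard_sdiff_eq_ncard _ {d | d i = 0} (countSet_finite hw μ),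
    countSet_insert_inter_eq hi, countSet_diff_eq_image (mem_insert_self i s),
    Set.ncard_image_of_injective _ (add_left_injective _), Nat.cast_add]

theorem countSeries_mul_prod {s : Finset ι} (hw : ∀ i ∈ s, w i ≠ 0) :
    countSeries ν w s * ∏ i ∈ s, (1 - monomial (w i) 1) = monomial ν 1 := by
  induction s using Finset.induction_on with
  | empty => rw [prod_empty, mul_one, countSeries_empty]
  | insert i s hi ih =>
    have hins := countSeries_insert (ν := ν) hi hw
    rw [prod_insert hi, ← mul_assoc, ← ih fun j hj => hw j (mem_insert_of_mem hj)]
    congr 1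
    linear_combination hins

end CountingSeries

theorem sum_range_sum_range_succ_add_sum_range_mul (D : ℕ → ℕ) (n : ℕ) :
    ∑ k ∈ range n, ∑ j ∈ range (k + 1), D j + ∑ j ∈ range n, j * D j =
      n * ∑ j ∈ range n, D j := by
  induction n with
  | zero => simp
  | succ n ih =>
    rw [sum_range_succ (fun k => ∑ j ∈ range (k + 1), D j), sum_range_succ (fun j => j * D j),
      sum_range_succ D]
    linarith

theorem toLex_lt_toLex_iff_add_ite_le {β : Type*} [LinearOrder β] {a b : ℕ} {x y : β}
    (hxy : x ≠ y) : toLex (a, x) < toLex (b, y) ↔ a + (if y < x then 1 else 0) ≤ b := by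
  rw [Prod.Lex.toLex_lt_toLex]
  rcases hxy.lt_or_gt with h | h
  · simp only [h, h.not_gt, if_false, and_true]
    omega
  · simp only [h, h.not_gt, if_true, and_false, or_false]
    omega

noncomputable def bideg (a b : ℕ) : Fin 2 →₀ ℕ := Finsupp.single 0 a + Finsupp.single 1 b

@[simp] lemma bideg_apply_zero (a b : ℕ) : bideg a b 0 = a := by simp [bideg]

@[simp] lemma bideg_apply_one (a b : ℕ) : bideg a b 1 = b := by simp [bideg]

lemma bideg_add_bideg (a b c e : ℕ) : bideg a b + bideg c e = bideg (a + c) (b + e) := by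
  simp only [bideg, Finsupp.single_add]
  abel

lemma bideg_inj {a b c e : ℕ} : bideg a b = bideg c e ↔ a = c ∧ b = e := by
  refine ⟨fun h => ⟨by simpa using congrArg (· 0) h, by simpa using congrArg (· 1) h⟩, ?_⟩
  rintro ⟨rfl, rfl⟩
  rfl

lemma eq_bideg (μ : Fin 2 →₀ ℕ) : μ = bideg (μ 0) (μ 1) :=
  Finsupp.ext (Fin.forall_fin_two.2 ⟨by simp, by simp⟩)

lemma sum_smul_bideg (s : Finset ℕ) (d : ℕ → ℕ) :
    ∑ j ∈ s, d j • bideg 1 j = bideg (∑ j ∈ s, d j) (∑ j ∈ s, j * d j) := by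
  simp only [bideg, smul_add, Finsupp.smul_single, smul_eq_mul, mul_one, sum_add_distrib,
    ← Finsupp.single_finsetSum, mul_comm]

lemma monomial_bideg (a b : ℕ) :
    monomial (bideg a b) (1 : ℤ) = X 0 ^ a * X 1 ^ b := by
  rw [X_pow_eq, X_pow_eq, monomial_mul_monomial, one_mul, bideg]

variable {r n : ℕ}

section Entries

variable (η : ColoredPerm r n)

lemma memC_zero (hr : 0 < r) : memC r n (0, 0) :=
  ⟨Nat.zero_le n, hr, fun _ => rfl⟩

lemma memC_cval (k : Fin n) : memC r n (cval η k) :=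
  ⟨(η.perm k).isLt, (η.color k).isLt, by simp [cval]⟩

lemma memC_centry (hr : 0 < r) (j : ℕ) : memC r n (centry η j) := by
  unfold centry
  split
  · exact memC_cval η _
  · exact memC_zero hr

lemma centry_zero : centry η 0 = (0, 0) := by
  simp [centry]

lemma centry_succ (k : Fin n) : centry η (k + 1) = cval η k := by
  simp [centry, k.isLt]

lemma centry_succ_ne {j : ℕ} (hj : j < n) : centry η (j + 1) ≠ centry η j := by
  intro h
  replace h := congrArg Prod.fst h
  rw [show j + 1 = (⟨j, hj⟩ : Fin n) + 1 from rfl, centry_succ] at h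
  cases j with
  | zero => simp [centry_zero, cval] at h
  | succ k =>
    rw [show centry η (k + 1) = cval η ⟨k, by omega⟩ from centry_succ η ⟨k, by omega⟩] at h
    have := η.perm.injective (Fin.ext (by simpa [cval] using h))
    simp [Fin.ext_iff] at this

noncomputable def descentInd (lt : CI → CI → Prop) (j : ℕ) : ℕ :=
  if lt (centry η (j + 1)) (centry η j) then 1 else 0

lemma desStat_eq_sum (lt : CI → CI → Prop) :
    desStat lt η = ∑ j ∈ range n, descentInd η lt j := by
  rw [desStat, DesSet, card_filter]
  rfl

lemma majStat_eq_sum (lt : CI → CI → Prop) :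
    majStat lt η = ∑ j ∈ range n, j * descentInd η lt j := by
  simp only [majStat, DesSet, sum_filter, descentInd, mul_ite, mul_one, mul_zero]

def seqAlong (f : ColoredSeq r n) (j : ℕ) : ℕ :=
  if h : 1 ≤ j ∧ j ≤ n then f.val (η.perm ⟨j - 1, by omega⟩) else 0

lemma seqAlong_zero (f : ColoredSeq r n) : seqAlong η f 0 = 0 := by
  simp [seqAlong]

lemma seqAlong_succ (f : ColoredSeq r n) {k : ℕ} (hk : k < n) :
    seqAlong η f (k + 1) = f.val (η.perm ⟨k, hk⟩) := by
  simp [seqAlong, hk]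

noncomputable def height (lt : CI → CI → Prop) (d : ℕ → ℕ) (m : ℕ) : ℕ :=
  ∑ j ∈ range m, (d j + descentInd η lt j)

lemma height_succ (lt : CI → CI → Prop) (d : ℕ → ℕ) (j : ℕ) :
    height η lt d (j + 1) = height η lt d j + (d j + descentInd η lt j) :=
  sum_range_succ _ _

lemma height_add_descentInd_le (lt : CI → CI → Prop) (d : ℕ → ℕ) (j : ℕ) :
    height η lt d j + descentInd η lt j ≤ height η lt d (j + 1) := by
  rw [height_succ]
  omega

lemma height_mono (lt : CI → CI → Prop) (d : ℕ → ℕ) : Monotone (height η lt d) :=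
  fun _ _ h => sum_le_sum_of_subset (range_subset_range.2 h)

lemma height_eq_sum_add_desStat (lt : CI → CI → Prop) (d : ℕ → ℕ) :
    height η lt d n = ∑ j ∈ range n, d j + desStat lt η := by
  rw [height, sum_add_distrib, desStat_eq_sum]

lemma mul_height_sub_sum_height (lt : CI → CI → Prop) (d : ℕ → ℕ) :
    n * height η lt d n - ∑ k ∈ range n, height η lt d (k + 1) =
      ∑ j ∈ range n, j * d j + majStat lt η := by
  have h := sum_range_sum_range_succ_add_sum_range_mul (fun j => d j + descentInd η lt j) n
  have hmaj : ∑ j ∈ range n, j * (d j + descentInd η lt j) =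
      ∑ j ∈ range n, j * d j + majStat lt η := by
    rw [majStat_eq_sum, ← sum_add_distrib]
    simp only [mul_add]
  simp only [height]
  omega

noncomputable def gaps (lt : CI → CI → Prop) (f : ColoredSeq r n) (j : ℕ) : ℕ :=
  if j < n then seqAlong η f (j + 1) - seqAlong η f j - descentInd η lt j else 0

end Entries

theorem ColoredSeq.ext {f g : ColoredSeq r n} (hval : f.val = g.val) (hcol : f.col = g.col) :
    f = g := by
  cases f
  cases g
  simp_all

namespace PDOrder

variable (O : PDOrder r n) (η : ColoredPerm r n)

def Carrier (_O : PDOrder r n) : Type := {x : CI // memC r n x}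

instance : IsStrictTotalOrder O.Carrier (fun x y => O.lt x.1 y.1) where
  trichotomous x y hxy hyx :=
    Subtype.ext ((O.trichotomy x.1 y.1 x.2 y.2).resolve_right (not_or.2 ⟨hxy, hyx⟩))
  irrefl x := O.irrefl x.1 x.2
  trans x y z := O.trans x.1 y.1 z.1 x.2 y.2 z.2

noncomputable instance : LinearOrder O.Carrier :=
  linearOrderOfSTO fun x y : O.Carrier => O.lt x.1 y.1

def entry (hr : 0 < r) (j : ℕ) : O.Carrier := ⟨centry η j, memC_centry η hr j⟩

lemma entry_lt_entry_iff (hr : 0 < r) {i j : ℕ} :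
    O.entry η hr i < O.entry η hr j ↔ O.lt (centry η i) (centry η j) := Iff.rfl

lemma key_lt_key_succ_iff (hr : 0 < r) {A : ℕ → ℕ} {j : ℕ} (hj : j < n) :
    toLex (A j, O.entry η hr j) < toLex (A (j + 1), O.entry η hr (j + 1)) ↔
      A j + descentInd η O.lt j ≤ A (j + 1) := by
  rw [toLex_lt_toLex_iff_add_ite_le (β := O.Carrier)
    fun h => centry_succ_ne η hj (congrArg Subtype.val h).symm]
  unfold descentInd
  by_cases h : O.lt (centry η (j + 1)) (centry η j)
  · rw [if_pos h, if_pos (show O.entry η hr (j + 1) < O.entry η hr j from h)]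
  · rw [if_neg h, if_neg (show ¬O.entry η hr (j + 1) < O.entry η hr j from h)]

lemma key_succ_lt_key_succ_iff (hr : 0 < r) {A : ℕ → ℕ} {i j : Fin n} :
    toLex (A (i + 1), O.entry η hr (i + 1)) < toLex (A (j + 1), O.entry η hr (j + 1)) ↔
      A (i + 1) < A (j + 1) ∨ A (i + 1) = A (j + 1) ∧ O.lt (cval η i) (cval η j) := by
  rw [Prod.Lex.toLex_lt_toLex, entry_lt_entry_iff, centry_succ, centry_succ]

lemma strictMonoOn_key (hr : 0 < r) {A : ℕ → ℕ}
    (hA : ∀ j < n, A j + descentInd η O.lt j ≤ A (j + 1)) :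
    StrictMonoOn (fun j => toLex (A j, O.entry η hr j)) (Set.Iic n) :=
  strictMonoOn_Iic_of_lt_succ fun j hj => (O.key_lt_key_succ_iff η hr hj).2 (hA j hj)

lemma color_eq_zero_of_lt_cval {k : Fin n} (h : O.lt (0, 0) (cval η k)) :
    (η.color k : ℕ) = 0 := by
  have hr := (η.color k).pos
  by_contra hc
  have hlt := O.pos_dom 0 (η.perm k + 1) (η.color k) (Nat.zero_le n) (by omega) (η.perm k).isLt
    (by omega) (η.color k).isLt
  exact O.irrefl _ (memC_zero hr) (O.trans _ _ _ (memC_zero hr) (memC_cval η k) (memC_zero hr)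
    h hlt)

lemma lt_cval_of_color_eq_zero {k : Fin n} (h : (η.color k : ℕ) = 0) :
    O.lt (0, 0) (cval η k) := by
  simpa [cval, h] using O.nat_mono 0 (η.perm k + 1) (Nat.zero_le n) (η.perm k).isLt (by omega)

theorem isSorted_iff (hr : 0 < r) (f : ColoredSeq r n) :
    isSorted O.lt f η ↔ (∀ i, (η.color i : ℕ) = f.col (η.perm i)) ∧
      ∀ j < n, seqAlong η f j + descentInd η O.lt j ≤ seqAlong η f (j + 1) := by
  refine ⟨fun ⟨hcol, hsort⟩ => ⟨hcol, fun j hj => ?_⟩, fun ⟨hcol, hA⟩ => ⟨hcol, ?_⟩⟩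
  · refine (O.key_lt_key_succ_iff η hr hj).1 ?_
    cases j with
    | zero =>
      rw [seqAlong_zero, seqAlong_succ η f hj, Prod.Lex.toLex_lt_toLex]
      rcases Nat.eq_zero_or_pos (f.val (η.perm ⟨0, hj⟩)) with h0 | hpos
      · refine Or.inr ⟨h0.symm, ?_⟩
        have hc : (η.color ⟨0, hj⟩ : ℕ) = 0 := (hcol _).trans (f.zero_col _ h0)
        rw [entry_lt_entry_iff, centry_zero, centry_succ η ⟨0, hj⟩]
        exact O.lt_cval_of_color_eq_zero η hc
      · exact Or.inl hpos
    | succ k =>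
      have h := hsort ⟨k, by omega⟩ ⟨k + 1, hj⟩ (Fin.mk_lt_mk.2 k.lt_succ_self)
      rw [← seqAlong_succ η f, ← seqAlong_succ η f hj] at h
      exact (O.key_succ_lt_key_succ_iff η hr (i := ⟨k, by omega⟩) (j := ⟨k + 1, hj⟩)).2 h
  · intro i j hij
    have := O.strictMonoOn_key η hr hA (Set.mem_Iic.2 i.isLt) (Set.mem_Iic.2 j.isLt)
      (Nat.succ_lt_succ hij)
    rwa [O.key_succ_lt_key_succ_iff η hr, seqAlong_succ η f i.isLt, seqAlong_succ η f j.isLt]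
      at this

noncomputable def toSeq (hr : 0 < r) (d : ℕ → ℕ) : ColoredSeq r n where
  val i := height η O.lt d (η.perm⁻¹ i + 1)
  col i := η.color (η.perm⁻¹ i)
  col_lt i := (η.color _).isLt
  zero_col i h := by
    set k := η.perm⁻¹ i
    have hkey := O.strictMonoOn_key η hr (fun j _ => height_add_descentInd_le η O.lt d j)
      (Set.mem_Iic.2 (Nat.zero_le n)) (Set.mem_Iic.2 k.isLt) (Nat.succ_pos k)
    have h0 : height η O.lt d 0 = 0 := sum_range_zero _
    rw [Prod.Lex.toLex_lt_toLex, h0, h, entry_lt_entry_iff, centry_zero, centry_succ] at hkey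
    exact O.color_eq_zero_of_lt_cval η (hkey.resolve_left (lt_irrefl 0)).2

lemma seqAlong_toSeq (hr : 0 < r) (d : ℕ → ℕ) {j : ℕ} (hj : j ≤ n) :
    seqAlong η (O.toSeq η hr d) j = height η O.lt d j := by
  cases j with
  | zero => rw [seqAlong_zero]; rfl
  | succ k =>
    rw [seqAlong_succ η _ hj]
    simp [toSeq]

lemma toSeq_isSorted (hr : 0 < r) (d : ℕ → ℕ) : isSorted O.lt (O.toSeq η hr d) η := by
  refine (O.isSorted_iff η hr _).2 ⟨fun i => by simp [toSeq], fun j hj => ?_⟩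
  rw [O.seqAlong_toSeq η hr d hj.le, O.seqAlong_toSeq η hr d hj]
  exact height_add_descentInd_le η O.lt d j

lemma height_gaps (hr : 0 < r) {f : ColoredSeq r n} (hf : isSorted O.lt f η) {j : ℕ}
    (hj : j ≤ n) : height η O.lt (gaps η O.lt f) j = seqAlong η f j := by
  induction j with
  | zero => rw [seqAlong_zero]; rfl
  | succ j ih =>
    have hle := ((O.isSorted_iff η hr f).1 hf).2 j hj
    rw [height_succ, ih (by omega), gaps, if_pos (by omega)]
    omega

lemma toSeq_gaps (hr : 0 < r) {f : ColoredSeq r n} (hf : isSorted O.lt f η) :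
    O.toSeq η hr (gaps η O.lt f) = f := by
  refine ColoredSeq.ext (funext fun i => ?_) (funext fun i => ?_)
  · change height η O.lt (gaps η O.lt f) (η.perm⁻¹ i + 1) = f.val i
    rw [O.height_gaps η hr hf (η.perm⁻¹ i).isLt, seqAlong_succ η f (η.perm⁻¹ i).isLt]
    simp
  · change (η.color (η.perm⁻¹ i) : ℕ) = f.col i
    rw [hf.1]
    simp

lemma gaps_toSeq (hr : 0 < r) {d : ℕ → ℕ} (hd : ∀ j ∉ range n, d j = 0) :
    gaps η O.lt (O.toSeq η hr d) = d := by
  funext j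
  rw [gaps]
  split_ifs with hj
  · rw [O.seqAlong_toSeq η hr d hj, O.seqAlong_toSeq η hr d hj.le, height_succ]
    omega
  · exact (hd j (by simpa using hj)).symm

noncomputable def sortedEquiv (hr : 0 < r) :
    {f : ColoredSeq r n // isSorted O.lt f η} ≃ {d : ℕ → ℕ // ∀ j ∉ range n, d j = 0} where
  toFun f := ⟨gaps η O.lt f.1, fun j hj => if_neg (by simpa using hj)⟩
  invFun d := ⟨O.toSeq η hr d.1, O.toSeq_isSorted η hr d.1⟩
  left_inv f := Subtype.ext (O.toSeq_gaps η hr f.2)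
  right_inv d := Subtype.ext (O.gaps_toSeq η hr d.2)

lemma maxf_toSeq (hr : 0 < r) (d : ℕ → ℕ) : maxf (O.toSeq η hr d) = height η O.lt d n := by
  refine le_antisymm (Finset.sup_le fun i _ => height_mono _ _ _ (η.perm⁻¹ i).isLt) ?_
  rcases n.eq_zero_or_pos with rfl | hn
  · exact (sum_range_zero _).le
  · have := le_sup (f := (O.toSeq η hr d).val) (mem_univ (η.perm ⟨n - 1, by omega⟩))
    simpa [maxf, toSeq, Nat.sub_add_cancel hn] using this

lemma sumf_toSeq (hr : 0 < r) (d : ℕ → ℕ) :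
    sumf (O.toSeq η hr d) = ∑ k ∈ range n, height η O.lt d (k + 1) := by
  rw [sumf, ← Equiv.sum_comp η.perm,
    ← Fin.sum_univ_eq_sum_range (fun k => height η O.lt d (k + 1))]
  simp [toSeq]

lemma toSeq_stats_iff (hr : 0 < r) (d : ℕ → ℕ) (M s : ℕ) :
    (maxf (O.toSeq η hr d) = M ∧ n * maxf (O.toSeq η hr d) - sumf (O.toSeq η hr d) = s) ↔
      bideg (desStat O.lt η) (majStat O.lt η) + ∑ j ∈ range n, d j • bideg 1 j = bideg M s := by
  rw [sum_smul_bideg, bideg_add_bideg, bideg_inj, O.maxf_toSeq, O.sumf_toSeq,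
    mul_height_sub_sum_height, height_eq_sum_add_desStat, add_comm (desStat _ _),
    add_comm (majStat _ _)]

noncomputable def fiberEquiv (hr : 0 < r) (M s : ℕ) :
    {f : ColoredSeq r n // isSorted O.lt f η ∧ maxf f = M ∧ n * maxf f - sumf f = s} ≃
      countSet (bideg (desStat O.lt η) (majStat O.lt η)) (bideg 1) (range n) (bideg M s) :=
  (Equiv.subtypeSubtypeEquivSubtypeInter _ _).symm.trans <|
    (((O.sortedEquiv η hr).symm.subtypeEquiv fun d =>
      (O.toSeq_stats_iff η hr d.1 M s).symm).symm.trans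
      (Equiv.subtypeSubtypeEquivSubtypeInter _ _))

lemma lhs2_eq_countSeries (hr : 0 < r) :
    lhs2 r n O η = countSeries (bideg (desStat O.lt η) (majStat O.lt η)) (bideg 1) (range n) := by
  ext μ
  have h := Nat.card_congr (O.fiberEquiv η hr (μ 0) (μ 1))
  rw [← eq_bideg, Nat.card_coe_set_eq] at h
  rw [coeff_countSeries, ← h]
  rfl

end PDOrder

theorem stmt2_general (r n : ℕ) (hr : 0 < r) (O : PDOrder r n) (η : ColoredPerm r n) :
    (∀ M s : ℕ,
      {f : ColoredSeq r n | isSorted O.lt f η ∧ maxf f = M ∧ n * maxf f - sumf f = s}.Finite) ∧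
    lhs2 r n O η *
        ∏ i ∈ Finset.range n,
          (1 - (MvPowerSeries.X 0 : MvPowerSeries (Fin 2) ℤ) * MvPowerSeries.X 1 ^ i) =
      (MvPowerSeries.X 0 : MvPowerSeries (Fin 2) ℤ) ^ desStat O.lt η *
        MvPowerSeries.X 1 ^ majStat O.lt η := by
  have hw : ∀ j ∈ range n, bideg 1 j ≠ 0 := fun j _ h => by
    simpa using congrArg (· 0) h
  refine ⟨fun M s => ?_, ?_⟩
  · have := (countSet_finite (ν := bideg (desStat O.lt η) (majStat O.lt η)) hw
      (bideg M s)).to_subtype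
    exact Finite.of_equiv _ (O.fiberEquiv η hr M s).symm
  · have hfactor (i : ℕ) : (X 0 : MvPowerSeries (Fin 2) ℤ) * X 1 ^ i = monomial (bideg 1 i) 1 := by
      rw [monomial_bideg, pow_one]
    simp_rw [hfactor, ← monomial_bideg, O.lhs2_eq_countSeries η hr]
    exact countSeries_mul_prod hw

theorem stmt2 (r n : ℕ) (hr : 0 < r) (hn : 0 < n) (O : PDOrder r n) (η : ColoredPerm r n) :
    (∀ M s : ℕ,
      {f : ColoredSeq r n | isSorted O.lt f η ∧ maxf f = M ∧ n * maxf f - sumf f = s}.Finite) ∧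
    lhs2 r n O η *
        ∏ i ∈ Finset.range n,
          (1 - (MvPowerSeries.X 0 : MvPowerSeries (Fin 2) ℤ) * MvPowerSeries.X 1 ^ i) =
      (MvPowerSeries.X 0 : MvPowerSeries (Fin 2) ℤ) ^ desStat O.lt η *
        MvPowerSeries.X 1 ^ majStat O.lt η :=
  stmt2_general r n hr O η
end

section
/- Let r and n be positive integers and let Q be the Adin–Roichman order. Let γ = (π(1)^{c_1},…,π(n)^{c_n}) ∈ G(r,n), let μ ∈ P_n be γ-compatible and let λ ∈ P_n be γ^{-1}-compatible (both with respect to Q). Define g = λ and define f by declaring the π(i)-th entry of f to be μ_i carrying color c_i (for i = 1,…,n). Then f ∈ N_0^{r,n} (in particular every zero entry of f has color 0) and [g; f] ∈ B(r,n). -/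
open scoped Classical

/-- The Adin–Roichman order on colored nonnegative integers:
`i^c <_Q j^d` iff `c > d`, or `c = d` and `i < j`. -/
def ARlt (x y : ℕ × ℕ) : Prop := y.2 < x.2 ∨ (x.2 = y.2 ∧ x.1 < y.1)

def ARle (x y : ℕ × ℕ) : Prop := x = y ∨ ARlt x y

/-- `nthEntry n g j` is `g_j` for `j ∈ [1,n]` (1-based), with the convention `g_0 = 0`. -/
def nthEntry (n : ℕ) (g : Fin n → ℕ) (j : ℕ) : ℕ :=
  if h : 1 ≤ j ∧ j ≤ n then g ⟨j - 1, by omega⟩ else 0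

/-- The defining condition of the set `B(r,n)` of colored bipartite partitions. -/
def memB {r n : ℕ} (g : Fin n → ℕ) (f : ColoredSeq r n) : Prop :=
  Monotone g ∧
  ∀ (i : ℕ) (h : i + 1 < n),
    g ⟨i, by omega⟩ < g ⟨i + 1, h⟩ ∨
      (g ⟨i, by omega⟩ = g ⟨i + 1, h⟩ ∧
        ARle (f.val ⟨i, by omega⟩, f.col ⟨i, by omega⟩)
          (f.val ⟨i + 1, h⟩, f.col ⟨i + 1, h⟩))


/-!
A positive color at position `k` of `γ` forces `μ_k > 0`: walking left from `k`, the colors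
cannot stay positive all the way to `γ(0) = 0`, and the first strict increase of color is a
descent of `γ`, where `μ` increases strictly. For the `B(r,n)` condition, `λ_i = λ_{i+1}` means
`i` is not a descent of `γ⁻¹`, so the colored positions `π⁻¹(i)^{c}` and `π⁻¹(i+1)^{c'}` appear
in `Q`-increasing order; since `μ` is weakly increasing, the entries of `f` at `i` and `i+1`
inherit this order.
-/

lemma ARlt_of_not_ARlt {x y : ℕ × ℕ} (hne : x ≠ y) (h : ¬ARlt y x) : ARlt x y := by
  obtain ⟨a, c⟩ := x
  obtain ⟨b, d⟩ := y
  simp only [ARlt, ne_eq, Prod.mk.injEq] at *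
  omega

lemma ARle_of_ARlt {p q c d x y : ℕ} (h : ARlt (p, c) (q, d)) (hxy : c = d → p < q → x ≤ y) :
    ARle (x, c) (y, d) := by
  simp only [ARle, ARlt, Prod.mk.injEq] at *
  omega

section ColoredPerm

variable {r n : ℕ}

lemma centry_zero_s10 (γ : ColoredPerm r n) : centry γ 0 = (0, 0) := by
  simp [centry]

lemma centry_succ_s10 (γ : ColoredPerm r n) (i : ℕ) (h : i < n) :
    centry γ (i + 1) = cval γ ⟨i, h⟩ := by
  simp [centry, Nat.succ_le_of_lt h]

lemma le_of_pos_centry_snd {γ : ColoredPerm r n} {j : ℕ} (h : 0 < (centry γ j).2) : j ≤ n := by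
  unfold centry at h
  split_ifs at h with hj
  · exact hj.2
  · simp at h

lemma mem_DesSet_iff (lt : CI → CI → Prop) (γ : ColoredPerm r n) (j : ℕ) :
    j ∈ DesSet lt γ ↔ j < n ∧ lt (centry γ (j + 1)) (centry γ j) := by
  simp [DesSet]

lemma pos_of_pos_centry_snd (γ : ColoredPerm r n) {a : ℕ → ℕ} (ha : ∀ j < n, a j ≤ a (j + 1))
    (hdes : ∀ j ∈ DesSet ARlt γ, a j < a (j + 1)) :
    ∀ j, 0 < (centry γ j).2 → 0 < a j
  | 0, h => by simp [centry_zero_s10] at h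
  | j + 1, h => by
    have hj : j < n := le_of_pos_centry_snd h
    by_cases hc : (centry γ j).2 < (centry γ (j + 1)).2
    · exact (Nat.zero_le _).trans_lt (hdes j ((mem_DesSet_iff _ γ j).2 ⟨hj, Or.inl hc⟩))
    · exact (pos_of_pos_centry_snd γ ha hdes j (by omega)).trans_le (ha j hj)

end ColoredPerm

section nthEntry

variable {n : ℕ}

lemma nthEntry_zero (g : Fin n → ℕ) : nthEntry n g 0 = 0 := by
  simp [nthEntry]

lemma nthEntry_succ (g : Fin n → ℕ) (i : ℕ) (h : i < n) : nthEntry n g (i + 1) = g ⟨i, h⟩ := by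
  simp [nthEntry, Nat.succ_le_of_lt h]

lemma nthEntry_le_succ {g : Fin n → ℕ} (hg : Monotone g) {j : ℕ} (hj : j < n) :
    nthEntry n g j ≤ nthEntry n g (j + 1) := by
  cases j with
  | zero => simp [nthEntry_zero]
  | succ i =>
    rw [nthEntry_succ g i (by omega), nthEntry_succ g (i + 1) hj]
    exact hg (Fin.mk_le_mk.2 i.le_succ)

end nthEntry

section Compatible

variable {r n : ℕ} (γ : ColoredPerm r n) {mu : Fin n → ℕ}

lemma color_eq_zero_of_eq_zero (hmu : Monotone mu)
    (hmuc : ∀ j ∈ DesSet ARlt γ, nthEntry n mu j < nthEntry n mu (j + 1))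
    (k : Fin n) (hk : mu k = 0) : (γ.color k : ℕ) = 0 := by
  by_contra hc
  have hpos := pos_of_pos_centry_snd γ (a := nthEntry n mu)
    (fun _ hj => nthEntry_le_succ hmu hj) hmuc (k + 1)
    (by rw [centry_succ_s10 γ k k.isLt]; exact Nat.pos_of_ne_zero hc)
  rw [nthEntry_succ mu k k.isLt] at hpos
  exact hpos.ne' hk

lemma ARle_of_not_mem_DesSet_cinv (hmu : Monotone mu) (i : ℕ) (h : i + 1 < n)
    (hnd : i + 1 ∉ DesSet ARlt (cinv γ)) :
    ARle (mu (γ.perm⁻¹ ⟨i, by omega⟩), (γ.color (γ.perm⁻¹ ⟨i, by omega⟩) : ℕ))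
      (mu (γ.perm⁻¹ ⟨i + 1, h⟩), (γ.color (γ.perm⁻¹ ⟨i + 1, h⟩) : ℕ)) := by
  rw [mem_DesSet_iff, centry_succ_s10 _ (i + 1) h, centry_succ_s10 _ i (by omega)] at hnd
  have hne : cval (cinv γ) ⟨i, by omega⟩ ≠ cval (cinv γ) ⟨i + 1, h⟩ := by
    intro heq
    have := γ.perm.symm.injective (Fin.ext (Nat.succ_injective (congrArg Prod.fst heq)))
    simp [Fin.ext_iff] at this
  exact ARle_of_ARlt (ARlt_of_not_ARlt hne fun hlt => hnd ⟨h, hlt⟩)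
    fun _ hlt => hmu (Nat.succ_lt_succ_iff.1 hlt).le

end Compatible

theorem stmt10 (r n : ℕ) (γ : ColoredPerm r n)
    (mu lam : Fin n → ℕ) (hmu : Monotone mu) (hlam : Monotone lam)
    (hmuc : ∀ j ∈ DesSet ARlt γ, nthEntry n mu j < nthEntry n mu (j + 1))
    (hlamc : ∀ j ∈ DesSet ARlt (cinv γ), nthEntry n lam j < nthEntry n lam (j + 1))
    (fv fc : Fin n → ℕ)
    (hfv : ∀ i : Fin n, fv (γ.perm i) = mu i)
    (hfc : ∀ i : Fin n, fc (γ.perm i) = (γ.color i : ℕ)) :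
    (∀ j, fc j < r) ∧ (∀ j, fv j = 0 → fc j = 0) ∧
    Monotone lam ∧
    (∀ (i : ℕ) (h : i + 1 < n),
      lam ⟨i, by omega⟩ < lam ⟨i + 1, h⟩ ∨
        (lam ⟨i, by omega⟩ = lam ⟨i + 1, h⟩ ∧
          ARle (fv ⟨i, by omega⟩, fc ⟨i, by omega⟩)
            (fv ⟨i + 1, h⟩, fc ⟨i + 1, h⟩))) := by
  have hfv' (j : Fin n) : fv j = mu (γ.perm⁻¹ j) := by simpa using hfv (γ.perm⁻¹ j)
  have hfc' (j : Fin n) : fc j = γ.color (γ.perm⁻¹ j) := by simpa using hfc (γ.perm⁻¹ j)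
  refine ⟨fun j => hfc' j ▸ (γ.color _).isLt, fun j hj => ?_, hlam, fun i h => ?_⟩
  · rw [hfv'] at hj
    rw [hfc']
    exact color_eq_zero_of_eq_zero γ hmu hmuc _ hj
  · rcases (hlam (Fin.mk_le_mk.2 i.le_succ)).lt_or_eq with hlt | heq
    · exact Or.inl hlt
    · have hnd : i + 1 ∉ DesSet ARlt (cinv γ) := fun hdes => by
        have := hlamc _ hdes
        rw [nthEntry_succ lam i (by omega), nthEntry_succ lam (i + 1) h] at this
        exact this.ne heq
      rw [hfv', hfv', hfc', hfc']
      exact Or.inr ⟨heq, ARle_of_not_mem_DesSet_cinv γ hmu i h hnd⟩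
end
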